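/- Consider a sequence of finite populations indexed by n = m·k (m → ∞, k and 0 < ℓ < k fixed) in the design-based stratified setup under Assumption 1. If for each d ∈ {0,1} one has (1/n)Σ_{i=1}^n Y_i(d)⁴ = o(n) as n → ∞ (equivalently (1/n²)Σ_i Y_i(d)⁴ → 0), then the paired-strata variance estimator V̂_n = (1/m)(τ̂²_n − κ̂_n) satisfies n·|V̂_n − E[V̂_n]| → 0 in probability as n → ∞. -/

import Mathlib

open MeasureTheory ProbabilityTheory Filter Finset Topology

noncomputable section

namespace DesignBased

/-- The uniform (probability) measure on a finite set of outcomes. -/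
def uniformFinset {α : Type*} [MeasurableSpace α] (S : Finset α) : Measure α :=
  ((S.card : ENNReal))⁻¹ • ∑ d ∈ S, Measure.dirac d

/-- Assignment vectors for a stratum of size `k` with exactly `ℓ` treated units. -/
def assignSet (k ℓ : ℕ) : Finset (Fin k → Bool) :=
  Finset.univ.filter fun d => (Finset.univ.filter fun i => d i = true).card = ℓ

/-- Assumption 1: the treatment assignment `D` is distributed as the product, over the `m`
strata, of the uniform distribution on assignment vectors with exactly `ℓ` treated units. -/
def Assumption1 {Ω : Type*} [MeasurableSpace Ω] (P : Measure Ω) (m k ℓ : ℕ)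
    (D : Ω → Fin m → Fin k → Bool) : Prop :=
  Measurable D ∧
    Measure.map D P = Measure.pi fun _ : Fin m => uniformFinset (assignSet k ℓ)

variable {Ω : Type*}

/-- The difference-in-means estimator. -/
def hatDelta (m k ℓ : ℕ) (Y1 Y0 : Fin m → Fin k → ℝ)
    (D : Ω → Fin m → Fin k → Bool) (ω : Ω) : ℝ :=
  ((m : ℝ) * ℓ)⁻¹ * ∑ j, ∑ i, (if D ω j i then Y1 j i else 0)
    - ((m : ℝ) * ((k : ℝ) - ℓ))⁻¹ * ∑ j, ∑ i, (if D ω j i then 0 else Y0 j i)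

/-- The finite population average treatment effect. -/
def Delta (m k : ℕ) (Y1 Y0 : Fin m → Fin k → ℝ) : ℝ :=
  ((m : ℝ) * k)⁻¹ * ∑ j, ∑ i, (Y1 j i - Y0 j i)

/-- The stratum-level difference-in-means estimator. -/
def hatDeltaJ (m k ℓ : ℕ) (Y1 Y0 : Fin m → Fin k → ℝ)
    (D : Ω → Fin m → Fin k → Bool) (j : Fin m) (ω : Ω) : ℝ :=
  (ℓ : ℝ)⁻¹ * ∑ i, (if D ω j i then Y1 j i else 0)
    - ((k : ℝ) - ℓ)⁻¹ * ∑ i, (if D ω j i then 0 else Y0 j i)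

/-- The stratum-level average treatment effect. -/
def DeltaJ (m k : ℕ) (Y1 Y0 : Fin m → Fin k → ℝ) (j : Fin m) : ℝ :=
  (k : ℝ)⁻¹ * ∑ i, (Y1 j i - Y0 j i)

/-- The first stratum of the `j`-th pair of strata (strata are paired adjacently). -/
def pairA (m : ℕ) (j : Fin (m / 2)) : Fin m := ⟨2 * j.1, by have := j.2; omega⟩

/-- The second stratum of the `j`-th pair of strata. -/
def pairB (m : ℕ) (j : Fin (m / 2)) : Fin m := ⟨2 * j.1 + 1, by have := j.2; omega⟩

/-- τ̂²ₙ. -/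
def tauSq (m k ℓ : ℕ) (Y1 Y0 : Fin m → Fin k → ℝ)
    (D : Ω → Fin m → Fin k → Bool) (ω : Ω) : ℝ :=
  (m : ℝ)⁻¹ * ∑ j, (hatDeltaJ m k ℓ Y1 Y0 D j ω) ^ 2

/-- κ̂ₙ. -/
def kappaHat (m k ℓ : ℕ) (Y1 Y0 : Fin m → Fin k → ℝ)
    (D : Ω → Fin m → Fin k → Bool) (ω : Ω) : ℝ :=
  2 / (m : ℝ) * ∑ j : Fin (m / 2),
    hatDeltaJ m k ℓ Y1 Y0 D (pairA m j) ω * hatDeltaJ m k ℓ Y1 Y0 D (pairB m j) ω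

/-- The paired-strata variance estimator V̂ₙ. -/
def hatV (m k ℓ : ℕ) (Y1 Y0 : Fin m → Fin k → ℝ)
    (D : Ω → Fin m → Fin k → Bool) (ω : Ω) : ℝ :=
  (m : ℝ)⁻¹ * (tauSq m k ℓ Y1 Y0 D ω - kappaHat m k ℓ Y1 Y0 D ω)

/-- The Imai variance estimator V̂ᴵᴹₙ. -/
def hatVIM (m k ℓ : ℕ) (Y1 Y0 : Fin m → Fin k → ℝ)
    (D : Ω → Fin m → Fin k → Bool) (ω : Ω) : ℝ :=
  ((m : ℝ) * ((m : ℝ) - 1))⁻¹ *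
    ∑ j, (hatDeltaJ m k ℓ Y1 Y0 D j ω - hatDelta m k ℓ Y1 Y0 D ω) ^ 2

/-- The standard normal cumulative distribution function. -/
def stdNormCDF (x : ℝ) : ℝ := ((gaussianReal 0 1) (Set.Iic x)).toReal

/-- Conditional variance of `Z` given the sub-σ-algebra `m0`. -/
def condVar' {Ω' : Type*} (m0 : MeasurableSpace Ω') {mΩ : MeasurableSpace Ω'} (P : Measure Ω')
    (Z : Ω' → ℝ) : Ω' → ℝ :=
  P[fun ω => (Z ω - (P[Z|m0]) ω) ^ 2 | m0]

/-!
Write `Δⱼ` for the stratum estimators. Regrouping the strata in adjacent pairs,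
`m² V̂ = Σⱼ Δⱼ² - 2 Σₚ Δ₂ₚ Δ₂ₚ₊₁ = Σ_b (Δ₂_b - Δ₂_b₊₁)²` (plus `Δₘ₋₁²` when `m` is odd).
Under Assumption 1 the `Δⱼ` are independent, hence so are the block terms, and
`Var(n V̂) ≤ (k/m)² · 8 Σⱼ E Δⱼ⁴`. The power-mean inequality gives
`Δⱼ⁴ ≤ k³ Σ_{i ∈ λⱼ} (Yᵢ(1)⁴ + Yᵢ(0)⁴)`, so `Var(n V̂) ≤ 8 k⁷ n⁻² Σᵢ (Yᵢ(1)⁴ + Yᵢ(0)⁴) → 0`,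
and Chebyshev's inequality concludes.
-/

section Blocks

variable {m : ℕ}

/- Block `b` is the pair of strata `(2b, 2b + 1)`; when `m` is odd the last block is the single
stratum `m - 1`, encoded by `blockSnd = blockFst` and `blockWeight = 0`. -/
def blockFst (m : ℕ) (b : Fin ((m + 1) / 2)) : Fin m := ⟨2 * b.1, by have := b.2; omega⟩

def blockSnd (m : ℕ) (b : Fin ((m + 1) / 2)) : Fin m :=
  ⟨min (2 * b.1 + 1) (m - 1), by have := b.2; omega⟩

def blockWeight (m : ℕ) (b : Fin ((m + 1) / 2)) : ℝ := if 2 * b.1 + 1 < m then 1 else 0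

lemma blockFst_val_div_two (b : Fin ((m + 1) / 2)) : (blockFst m b).1 / 2 = b.1 := by
  simp only [blockFst]; omega

lemma blockSnd_val_div_two (b : Fin ((m + 1) / 2)) : (blockSnd m b).1 / 2 = b.1 := by
  have := b.2; simp only [blockSnd]; omega

lemma blockWeight_mul_self (b : Fin ((m + 1) / 2)) :
    blockWeight m b * blockWeight m b = blockWeight m b := by
  unfold blockWeight; split_ifs <;> norm_num

lemma sum_pair_eq_sum_blockWeight_mul (g : Fin m → Fin m → ℝ) :
    ∑ p : Fin (m / 2), g (pairA m p) (pairB m p)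
      = ∑ b, blockWeight m b * g (blockFst m b) (blockSnd m b) := by
  refine Fintype.sum_of_injective (Fin.castLE (by omega)) (Fin.castLE_injective _) _ _
    (fun b hb => ?_) (fun p => ?_)
  · have : ¬ 2 * b.1 + 1 < m := fun h => hb ⟨⟨b.1, by omega⟩, rfl⟩
    simp [blockWeight, this]
  · have := p.2
    have hB : blockSnd m (Fin.castLE (by omega) p) = pairB m p := by
      ext; simp only [blockSnd, pairB, Fin.val_castLE]; omega
    simp [blockWeight, hB, show 2 * p.1 + 1 < m by omega]
    rfl

lemma bijective_sumElim_blockFst_pairB :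
    Function.Bijective (Sum.elim (blockFst m) (pairB m)) := by
  refine ⟨?_, fun j => ?_⟩
  · rintro (a | a) (b | b) h <;>
      simp only [Sum.elim_inl, Sum.elim_inr, blockFst, pairB, Fin.ext_iff] at h
    all_goals first | omega | (congr 1; ext; omega)
  · rcases Nat.even_or_odd j.1 with ⟨r, hr⟩ | ⟨r, hr⟩
    · exact ⟨.inl ⟨r, by omega⟩, by ext; simp [blockFst]; omega⟩
    · exact ⟨.inr ⟨r, by omega⟩, by ext; simp [pairB]; omega⟩

lemma sum_eq_sum_blockFst_add_blockWeight_mul (w : Fin m → ℝ) :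
    ∑ j, w j = ∑ b, (w (blockFst m b) + blockWeight m b * w (blockSnd m b)) := by
  rw [Finset.sum_add_distrib, ← sum_pair_eq_sum_blockWeight_mul (fun _ j => w j)]
  calc ∑ j, w j = ∑ x, w (Sum.elim (blockFst m) (pairB m) x) :=
        (Fintype.sum_bijective _ bijective_sumElim_blockFst_pairB _ _ fun _ => rfl).symm
    _ = _ := Fintype.sum_sum_type _

lemma sum_sq_sub_two_mul_sum_pair_eq (u : Fin m → ℝ) :
    ∑ j, u j ^ 2 - 2 * ∑ p : Fin (m / 2), u (pairA m p) * u (pairB m p)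
      = ∑ b, (u (blockFst m b) - blockWeight m b * u (blockSnd m b)) ^ 2 := by
  rw [sum_eq_sum_blockFst_add_blockWeight_mul,
    sum_pair_eq_sum_blockWeight_mul (fun i j => u i * u j), Finset.mul_sum, ← Finset.sum_sub_distrib]
  refine Finset.sum_congr rfl fun b _ => ?_
  linear_combination -u (blockSnd m b) ^ 2 * blockWeight_mul_self b

lemma sub_blockWeight_mul_pow_four_le (b : Fin ((m + 1) / 2)) (s t : ℝ) :
    (s - blockWeight m b * t) ^ 4 ≤ 8 * (s ^ 4 + blockWeight m b * t ^ 4) := by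
  unfold blockWeight
  split_ifs
  · nlinarith [sq_nonneg (s + t), sq_nonneg (s - t), sq_nonneg (s ^ 2 - t ^ 2)]
  · nlinarith [pow_two_nonneg (s ^ 2)]

end Blocks

section Moments

variable {Ω : Type*} [MeasurableSpace Ω] {μ : Measure Ω}

lemma integrable_pow_of_memLp_of_even [IsFiniteMeasure μ] {f : Ω → ℝ} {n : ℕ} (hn : Even n)
    (hf : MemLp f n μ) : Integrable (fun ω => f ω ^ n) μ := by
  simpa [Real.norm_eq_abs, hn.pow_abs] using hf.integrable_norm_pow'

lemma memLp_comp_of_finite [IsFiniteMeasure μ] {α : Type*} [MeasurableSpace α] [Finite α]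
    [MeasurableSingletonClass α] {X : Ω → α} (hX : Measurable X) (g : α → ℝ) (p : ENNReal) :
    MemLp (fun ω => g (X ω)) p μ :=
  MemLp.of_discrete.comp_of_map hX.aemeasurable

theorem variance_sum_sq_sub_two_mul_sum_pair_le [IsProbabilityMeasure μ] {m : ℕ}
    {Z : Fin m → Ω → ℝ} (hZ : iIndepFun Z μ) (hZ4 : ∀ j, MemLp (Z j) 4 μ) :
    variance (fun ω => ∑ j, Z j ω ^ 2 - 2 * ∑ p : Fin (m / 2), Z (pairA m p) ω * Z (pairB m p) ω) μ
      ≤ 8 * ∑ j, ∫ ω, Z j ω ^ 4 ∂μ := by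
  set G : Fin ((m + 1) / 2) → Ω → ℝ := fun b ω =>
    Z (blockFst m b) ω - blockWeight m b * Z (blockSnd m b) ω
  have hG4 : ∀ b, MemLp (G b) 4 μ := fun b => (hZ4 _).sub ((hZ4 _).const_mul _)
  have hG2 : ∀ b, MemLp (fun ω => G b ω ^ 2) 2 μ := fun b =>
    (memLp_two_iff_integrable_sq ((hG4 b).aestronglyMeasurable.pow 2)).2 <| by
      simpa only [Pi.pow_apply, ← pow_mul] using integrable_pow_of_memLp_of_even (by decide) (hG4 b)
  have hindep : Set.Pairwise ↑(univ : Finset (Fin ((m + 1) / 2)))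
      fun b c => IndepFun (fun ω => G b ω ^ 2) (fun ω => G c ω ^ 2) μ := by
    intro b _ c _ hbc
    have hne : ∀ i j : Fin m, i.1 / 2 = b.1 → j.1 / 2 = c.1 → i ≠ j := fun i j hi hj hij =>
      hbc (Fin.ext (by rw [← hi, ← hj, hij]))
    have hφ : ∀ a : ℝ, Measurable fun x : ℝ × ℝ => (x.1 - a * x.2) ^ 2 := fun a => by fun_prop
    exact (hZ.indepFun_prodMk_prodMk₀ (fun j => (hZ4 j).aemeasurable) _ _ _ _
      (hne _ _ (blockFst_val_div_two b) (blockFst_val_div_two c))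
      (hne _ _ (blockFst_val_div_two b) (blockSnd_val_div_two c))
      (hne _ _ (blockSnd_val_div_two b) (blockFst_val_div_two c))
      (hne _ _ (blockSnd_val_div_two b) (blockSnd_val_div_two c))).comp
      (hφ (blockWeight m b)) (hφ (blockWeight m c))
  have hvar : ∀ b, variance (fun ω => G b ω ^ 2) μ
      ≤ 8 * (∫ ω, Z (blockFst m b) ω ^ 4 ∂μ
        + blockWeight m b * ∫ ω, Z (blockSnd m b) ω ^ 4 ∂μ) := by
    intro b
    have hint : ∀ j, Integrable (fun ω => Z j ω ^ 4) μ := fun j =>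
      integrable_pow_of_memLp_of_even (by decide) (hZ4 j)
    calc variance (fun ω => G b ω ^ 2) μ ≤ ∫ ω, G b ω ^ 4 ∂μ := by
          simpa only [Pi.pow_apply, ← pow_mul] using
            variance_le_expectation_sq (hG2 b).aestronglyMeasurable
      _ ≤ ∫ ω, 8 * (Z (blockFst m b) ω ^ 4 + blockWeight m b * Z (blockSnd m b) ω ^ 4) ∂μ :=
          integral_mono (integrable_pow_of_memLp_of_even (by decide) (hG4 b))
            (((hint _).add ((hint _).const_mul _)).const_mul _)
            fun ω => sub_blockWeight_mul_pow_four_le b _ _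
      _ = _ := by
          rw [integral_const_mul, integral_add (hint _) ((hint _).const_mul _), integral_const_mul]
  calc variance (fun ω => ∑ j, Z j ω ^ 2
        - 2 * ∑ p : Fin (m / 2), Z (pairA m p) ω * Z (pairB m p) ω) μ
      = variance (∑ b, fun ω => G b ω ^ 2) μ := by
        congr 1; ext ω
        rw [sum_sq_sub_two_mul_sum_pair_eq (fun j => Z j ω), Finset.sum_apply]
    _ = ∑ b, variance (fun ω => G b ω ^ 2) μ := IndepFun.variance_sum (fun b _ => hG2 b) hindep
    _ ≤ ∑ b, 8 * (∫ ω, Z (blockFst m b) ω ^ 4 ∂μ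
          + blockWeight m b * ∫ ω, Z (blockSnd m b) ω ^ 4 ∂μ) := Finset.sum_le_sum fun b _ => hvar b
    _ = 8 * ∑ j, ∫ ω, Z j ω ^ 4 ∂μ := by
        rw [sum_eq_sum_blockFst_add_blockWeight_mul (fun j => ∫ ω, Z j ω ^ 4 ∂μ), Finset.mul_sum]

end Moments

section Estimator

variable {Ω : Type*} {m k ℓ : ℕ} {D : Ω → Fin m → Fin k → Bool}

lemma hatDeltaJ_eq_sum (Y1 Y0 : Fin m → Fin k → ℝ) (j : Fin m) (ω : Ω) :
    hatDeltaJ m k ℓ Y1 Y0 D j ω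
      = ∑ i, if D ω j i then Y1 j i / ℓ else -(Y0 j i / ((k : ℝ) - ℓ)) := by
  simp only [hatDeltaJ, Finset.mul_sum, ← Finset.sum_sub_distrib]
  refine Finset.sum_congr rfl fun i _ => ?_
  split_ifs <;> ring

lemma hatDeltaJ_pow_four_le (hℓ : 0 < ℓ) (hℓk : ℓ < k) (Y1 Y0 : Fin m → Fin k → ℝ)
    (j : Fin m) (ω : Ω) :
    hatDeltaJ m k ℓ Y1 Y0 D j ω ^ 4 ≤ (k : ℝ) ^ 3 * ∑ i, (Y1 j i ^ 4 + Y0 j i ^ 4) := by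
  have h4 : Even 4 := by decide
  have hdiv : ∀ (a : ℝ) {c : ℝ}, 1 ≤ c → (a / c) ^ 4 ≤ a ^ 4 := fun a c hc => by
    rw [div_pow]; exact div_le_self (by positivity) (one_le_pow₀ hc)
  have hℓ1 : (1 : ℝ) ≤ ℓ := by exact_mod_cast hℓ
  have hkℓ1 : (1 : ℝ) ≤ (k : ℝ) - ℓ := by
    rw [le_sub_iff_add_le']; exact_mod_cast hℓk
  set w : Fin k → ℝ := fun i => if D ω j i then Y1 j i / ℓ else -(Y0 j i / ((k : ℝ) - ℓ))
  have hw : ∀ i, |w i| ^ 4 ≤ Y1 j i ^ 4 + Y0 j i ^ 4 := fun i => by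
    have := h4.pow_nonneg (Y1 j i)
    have := h4.pow_nonneg (Y0 j i)
    rw [h4.pow_abs]
    by_cases hi : D ω j i
    · simp only [w, hi, if_true]; linarith [hdiv (Y1 j i) hℓ1]
    · simp only [w, hi, if_false, Bool.false_eq_true, h4.neg_pow]
      linarith [hdiv (Y0 j i) hkℓ1]
  calc hatDeltaJ m k ℓ Y1 Y0 D j ω ^ 4 = |∑ i, w i| ^ 4 := by
        rw [hatDeltaJ_eq_sum, h4.pow_abs]
    _ ≤ (∑ i, |w i|) ^ 4 := by gcongr; exact Finset.abs_sum_le_sum_abs _ _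
    _ ≤ (k : ℝ) ^ 3 * ∑ i, |w i| ^ 4 := by
        simpa using pow_sum_le_card_mul_sum_pow (s := univ) (fun i _ => abs_nonneg (w i)) 3
    _ ≤ (k : ℝ) ^ 3 * ∑ i, (Y1 j i ^ 4 + Y0 j i ^ 4) := by gcongr with i; exact hw i

lemma mul_hatV_eq (Y1 Y0 : Fin m → Fin k → ℝ) (ω : Ω) :
    (m : ℝ) * k * hatV m k ℓ Y1 Y0 D ω = k / m * (∑ j, hatDeltaJ m k ℓ Y1 Y0 D j ω ^ 2
      - 2 * ∑ p : Fin (m / 2), hatDeltaJ m k ℓ Y1 Y0 D (pairA m p) ω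
          * hatDeltaJ m k ℓ Y1 Y0 D (pairB m p) ω) := by
  unfold hatV tauSq kappaHat
  rcases eq_or_ne (m : ℝ) 0 with h | h
  · simp [h]
  · field_simp

lemma isProbabilityMeasure_uniformFinset {α : Type*} [MeasurableSpace α] {S : Finset α}
    (hS : S.Nonempty) : IsProbabilityMeasure (uniformFinset S) :=
  ⟨by simp [uniformFinset, ENNReal.inv_mul_cancel, hS.ne_empty]⟩

lemma assignSet_nonempty (h : ℓ ≤ k) : (assignSet k ℓ).Nonempty := by
  obtain ⟨t, -, ht⟩ :=
    Finset.exists_subset_card_eq (s := (univ : Finset (Fin k))) (by simpa using h)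
  exact ⟨fun i => decide (i ∈ t), by simpa [assignSet] using ht⟩

variable [MeasurableSpace Ω] {P : Measure Ω} [IsProbabilityMeasure P]

lemma Assumption1.iIndepFun_apply (hD : Assumption1 P m k ℓ D) (hℓk : ℓ ≤ k) :
    iIndepFun (fun j ω => D ω j) P := by
  have := isProbabilityMeasure_uniformFinset (assignSet_nonempty hℓk)
  have hmeas : ∀ j, Measurable fun ω => D ω j := fun j => (measurable_pi_apply j).comp hD.1
  rw [iIndepFun_iff_map_fun_eq_pi_map fun j => (hmeas j).aemeasurable]
  have hmap : ∀ j, P.map (fun ω => D ω j) = uniformFinset (assignSet k ℓ) := fun j => by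
    rw [show (fun ω => D ω j) = (fun x => x j) ∘ D from rfl,
      ← Measure.map_map (measurable_pi_apply j) hD.1, hD.2, (measurePreserving_eval _ j).map_eq]
  simp only [hmap]
  exact hD.2

theorem variance_mul_hatV_le (hℓ : 0 < ℓ) (hℓk : ℓ < k) (hD : Assumption1 P m k ℓ D)
    (Y1 Y0 : Fin m → Fin k → ℝ) :
    variance (fun ω => (m : ℝ) * k * hatV m k ℓ Y1 Y0 D ω) P
      ≤ 8 * (k : ℝ) ^ 7 * ((((m : ℝ) * k) ^ 2)⁻¹ * ∑ j, ∑ i, Y1 j i ^ 4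
        + (((m : ℝ) * k) ^ 2)⁻¹ * ∑ j, ∑ i, Y0 j i ^ 4) := by
  set Z : Fin m → Ω → ℝ := fun j ω => hatDeltaJ m k ℓ Y1 Y0 D j ω
  have hZ : iIndepFun Z P := (hD.iIndepFun_apply hℓk.le).comp
    (fun j => hatDeltaJ m k ℓ Y1 Y0 (fun c _ => c) j) fun _ => measurable_of_countable _
  have hZ4 : ∀ j, MemLp (Z j) 4 P := fun j =>
    memLp_comp_of_finite ((measurable_pi_apply j).comp hD.1)
      (hatDeltaJ m k ℓ Y1 Y0 (fun c _ => c) j) 4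
  have hZ4_le : ∀ j, ∫ ω, Z j ω ^ 4 ∂P ≤ (k : ℝ) ^ 3 * ∑ i, (Y1 j i ^ 4 + Y0 j i ^ 4) :=
    fun j => by
      simpa using integral_mono (integrable_pow_of_memLp_of_even (by decide) (hZ4 j))
        (integrable_const _) fun ω => hatDeltaJ_pow_four_le hℓ hℓk Y1 Y0 j ω
  simp only [mul_hatV_eq, variance_const_mul]
  calc (k / m : ℝ) ^ 2 * variance _ P ≤ (k / m : ℝ) ^ 2 * (8 * ∑ j, ∫ ω, Z j ω ^ 4 ∂P) := by
        gcongr; exact variance_sum_sq_sub_two_mul_sum_pair_le hZ hZ4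
    _ ≤ (k / m : ℝ) ^ 2 * (8 * ∑ j, (k : ℝ) ^ 3 * ∑ i, (Y1 j i ^ 4 + Y0 j i ^ 4)) := by
        gcongr with j; exact hZ4_le j
    _ = _ := by
        have hk : (k : ℝ) ≠ 0 := Nat.cast_ne_zero.2 (by omega)
        simp only [← Finset.mul_sum, Finset.sum_add_distrib]
        rcases eq_or_ne (m : ℝ) 0 with hm | hm
        · simp [hm]
        · field_simp

end Estimator

/-- Under Assumption 1 along a sequence of finite populations with
`(1/n)Σᵢ Yᵢ(d)⁴ = o(n)` for `d ∈ {0,1}`, the paired-strata estimator `V̂ₙ` is consistent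
for its expectation: `n·|V̂ₙ − E[V̂ₙ]| → 0` in probability. -/
theorem hatV_consistent (k ℓ : ℕ) (hℓ : 0 < ℓ) (hℓk : ℓ < k)
    (Ω : ℕ → Type*) [∀ m, MeasurableSpace (Ω m)]
    (P : ∀ m, Measure (Ω m)) [∀ m, IsProbabilityMeasure (P m)]
    (Y1 Y0 : (m : ℕ) → Fin m → Fin k → ℝ)
    (D : (m : ℕ) → Ω m → Fin m → Fin k → Bool)
    (hD : ∀ m, Assumption1 (P m) m k ℓ (D m))
    (h4 : Tendsto (fun m : ℕ => (((m : ℝ) * k) ^ 2)⁻¹ * ∑ j, ∑ i, (Y1 m j i) ^ 4)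
      atTop (𝓝 0))
    (h4' : Tendsto (fun m : ℕ => (((m : ℝ) * k) ^ 2)⁻¹ * ∑ j, ∑ i, (Y0 m j i) ^ 4)
      atTop (𝓝 0)) :
    ∀ ε : ℝ, 0 < ε →
      Tendsto (fun m : ℕ =>
          P m {ω | ε ≤ (m : ℝ) * k *
            |hatV m k ℓ (Y1 m) (Y0 m) (D m) ω
              - ∫ ω', hatV m k ℓ (Y1 m) (Y0 m) (D m) ω' ∂P m|})
        atTop (𝓝 0) := by
  intro ε hε
  have hbound :=
    ENNReal.tendsto_ofReal (((h4.add h4').const_mul (8 * (k : ℝ) ^ 7)).div_const (ε ^ 2))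
  rw [add_zero, mul_zero, zero_div, ENNReal.ofReal_zero] at hbound
  refine tendsto_of_tendsto_of_tendsto_of_le_of_le tendsto_const_nhds hbound
    (fun _ => zero_le) fun m => ?_
  set S : Ω m → ℝ := fun ω => (m : ℝ) * k * hatV m k ℓ (Y1 m) (Y0 m) (D m) ω
  have hS : MemLp S 2 (P m) :=
    memLp_comp_of_finite (hD m).1 (fun x => (m : ℝ) * k * hatV m k ℓ (Y1 m) (Y0 m) id x) 2
  calc _ = P m {ω | ε ≤ |S ω - ∫ ω', S ω' ∂P m|} := by
        simp only [S, integral_const_mul, ← mul_sub, abs_mul, abs_of_nonneg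
          (by positivity : (0 : ℝ) ≤ (m : ℝ) * k)]
    _ ≤ ENNReal.ofReal (variance S (P m) / ε ^ 2) := meas_ge_le_variance_div_sq hS hε
    _ ≤ _ := by gcongr; exact variance_mul_hatV_le hℓ hℓk (hD m) (Y1 m) (Y0 m)

end DesignBased
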